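/- For the κ-layer ReLU encoder-decoder network F without skipped connections, for every input x ∈ ℝ^{d₀} one has F(x) = B̃(x) B(x)ᵀ x = Σ_i ⟨x, b_i(x)⟩ b̃_i(x), where B(x) := Υ^κ(x), B̃(x) := Υ̃^κ(x), and b_i(x), b̃_i(x) are their columns. That is, under ReLU the network acts on each input as an input-dependent linear frame representation. -/
import Mathlib


open Matrix

/-- Elementwise ReLU. -/
def relu {ι : Type*} (z : ι → ℝ) : ι → ℝ := fun i => max (z i) 0

/-- The diagonal 0–1 activation matrix `Λ(z)`, with `Λ(z)_{ii} = 1` iff `z_i > 0`,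
so that `σ(z) = Λ(z) z`. -/
noncomputable def actMat {ι : Type*} [Fintype ι] [DecidableEq ι] (z : ι → ℝ) : Matrix ι ι ℝ :=
  Matrix.diagonal fun i => if 0 < z i then 1 else 0

/-- Encoder features: `ξ⁰ = x`, `ξ^{l+1} = σ(E^{l+1ᵀ} ξ^l)`. -/
def enc (d : ℕ → ℕ) (E : (l : ℕ) → Matrix (Fin (d l)) (Fin (d (l + 1))) ℝ)
    (x : Fin (d 0) → ℝ) : (l : ℕ) → Fin (d l) → ℝ
  | 0 => x
  | l + 1 => relu ((E l)ᵀ.mulVec (enc d E x l))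

/-- Decoder features `ξ̃^j` of the κ-layer network: `ξ̃^κ = ξ^κ` and
`ξ̃^j = σ(D^{j+1} ξ̃^{j+1})` for `j < κ`.  In particular `F(x) = ξ̃⁰ = dec κ d E D x 0`. -/
def dec (κ : ℕ) (d : ℕ → ℕ) (E D : (l : ℕ) → Matrix (Fin (d l)) (Fin (d (l + 1))) ℝ)
    (x : Fin (d 0) → ℝ) : (j : ℕ) → Fin (d j) → ℝ
  | j =>
    if h : j < κ then relu ((D j).mulVec (dec κ d E D x (j + 1)))
    else enc d E x j
  termination_by j => κ - j
  decreasing_by simp_wf; omega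

/-- `Υ^l(x) = Υ^{l−1}(x) E^l Λ^l(x)`, `Υ⁰ = I`. -/
noncomputable def UpsE (d : ℕ → ℕ) (E : (l : ℕ) → Matrix (Fin (d l)) (Fin (d (l + 1))) ℝ)
    (x : Fin (d 0) → ℝ) : (l : ℕ) → Matrix (Fin (d 0)) (Fin (d l)) ℝ
  | 0 => 1
  | l + 1 => UpsE d E x l * E l * actMat ((E l)ᵀ.mulVec (enc d E x l))

/-- `Υ̃^l(x) = Υ̃^{l−1}(x) Λ̃^l(x) D^l`, `Υ̃⁰ = I`. -/
noncomputable def UpsD (κ : ℕ) (d : ℕ → ℕ) (E D : (l : ℕ) → Matrix (Fin (d l)) (Fin (d (l + 1))) ℝ)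
    (x : Fin (d 0) → ℝ) : (l : ℕ) → Matrix (Fin (d 0)) (Fin (d l)) ℝ
  | 0 => 1
  | l + 1 => UpsD κ d E D x l * actMat ((D l).mulVec (dec κ d E D x (l + 1))) * D l

lemma relu_eq_actMat {ι : Type*} [Fintype ι] [DecidableEq ι] (z : ι → ℝ) :
    relu z = (actMat z).mulVec z := by
  funext i
  simp only [relu, actMat, Matrix.mulVec_diagonal]
  rcases lt_or_ge 0 (z i) with h | h
  · simp [h, max_eq_left h.le]
  · simp [not_lt.mpr h, max_eq_right h]

lemma enc_eq (d : ℕ → ℕ) (E : (l : ℕ) → Matrix (Fin (d l)) (Fin (d (l + 1))) ℝ)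
    (x : Fin (d 0) → ℝ) (l : ℕ) :
    enc d E x l = ((UpsE d E x l)ᵀ).mulVec x := by
  induction l with
  | zero => simp [enc, UpsE]
  | succ l ih =>
    rw [show enc d E x (l+1) = relu ((E l)ᵀ.mulVec (enc d E x l)) from rfl,
      relu_eq_actMat, ih, show UpsE d E x (l+1) =
        UpsE d E x l * E l * actMat ((E l)ᵀ.mulVec (enc d E x l)) from rfl]
    rw [ih]
    simp [Matrix.transpose_mul, Matrix.mulVec_mulVec, actMat, Matrix.diagonal_transpose,
      Matrix.mul_assoc]

lemma dec_eq (κ : ℕ) (d : ℕ → ℕ) (E D : (l : ℕ) → Matrix (Fin (d l)) (Fin (d (l + 1))) ℝ)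
    (x : Fin (d 0) → ℝ) : ∀ l, l ≤ κ →
    dec κ d E D x 0 = (UpsD κ d E D x l).mulVec (dec κ d E D x l) := by
  intro l
  induction l with
  | zero => intro _; simp [UpsD]
  | succ l ih =>
    intro hl
    have hlt : l < κ := hl
    rw [ih hlt.le, show UpsD κ d E D x (l+1) = UpsD κ d E D x l *
      actMat ((D l).mulVec (dec κ d E D x (l + 1))) * D l from rfl]
    rw [show dec κ d E D x l = relu ((D l).mulVec (dec κ d E D x (l + 1))) by
      rw [dec]; exact dif_pos hlt]
    rw [relu_eq_actMat]
    simp [Matrix.mulVec_mulVec, Matrix.mul_assoc]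

/-- For the κ-layer ReLU encoder-decoder network without skipped
connections, for every input `x`: `F(x) = B̃(x)B(x)ᵀ x = Σ_i ⟨x, b_i(x)⟩ b̃_i(x)`,
where `B(x) = Υ^κ(x)` and `B̃(x) = Υ̃^κ(x)`. -/
theorem stmt_11 (κ : ℕ) (d : ℕ → ℕ)
    (E D : (l : ℕ) → Matrix (Fin (d l)) (Fin (d (l + 1))) ℝ)
    (x : Fin (d 0) → ℝ) :
    dec κ d E D x 0 = (UpsD κ d E D x κ * (UpsE d E x κ)ᵀ).mulVec x ∧
    dec κ d E D x 0 = fun j => ∑ i,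
      (∑ k, x k * UpsE d E x κ k i) * UpsD κ d E D x κ j i := by
  have h1 : dec κ d E D x 0 = (UpsD κ d E D x κ * (UpsE d E x κ)ᵀ).mulVec x := by
    rw [dec_eq κ d E D x κ le_rfl, show dec κ d E D x κ = enc d E x κ by
      rw [dec]; exact dif_neg (lt_irrefl κ), enc_eq, Matrix.mulVec_mulVec]
  refine ⟨h1, ?_⟩
  rw [h1]
  funext j
  simp only [Matrix.mulVec, Matrix.mul_apply, dotProduct, Matrix.transpose_apply,
    Finset.sum_mul, Finset.mul_sum]
  rw [Finset.sum_comm]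
  exact Finset.sum_congr rfl fun i _ => Finset.sum_congr rfl fun k _ => by ring
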